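/- arXiv:1906.07648 — 7 statements merged into one kernel-verified Lean document; each statement's English description precedes it below -/
import Mathlib

section
/- If H is a k-uniform hypergraph on n vertices such that for every vertex v the link hypergraph H(v) has a fractional matching of size at least n/k, then H has a fractional matching of size exactly n/k (a perfect fractional matching). -/
/-!
By LP duality it suffices to show that every fractional cover `t` of `H` has total weight at
least `n/k`; duality is obtained by separating the compact convex set of degree vectors of edge weightings of mass `n/k`
from the box `{d ≤ 1}` by a hyperplane, whose normal is then a cover of total weight `< n/k`.

For the cover bound, let `t` be minimal at `v₀`, with value `m`. The weighting `t - m` vanishes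
at `v₀` and gives every edge `e \ {v₀}` of the link `H(v₀)` weight at least `1 - k m`, so weak
duality against a fractional matching of `H(v₀)` of size `≥ n/k` gives
`(1 - k m) n/k ≤ ∑ t - n m`, that is `n/k ≤ ∑ t` when `k m ≤ 1`; when `k m > 1`, already
`∑ t ≥ n m > n/k`.
-/

open Finset

/-- A fractional matching of the hypergraph on vertex set `V` with edge set `E`:
a weight function `w : E → [0,1]` (extended by `0` off `E`) such that every vertex
has total incident weight at most `1`. -/
def IsFracMatching {V : Type*} [Fintype V] [DecidableEq V]
    (E : Finset (Finset V)) (w : Finset V → ℝ) : Prop :=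
  (∀ e, 0 ≤ w e ∧ w e ≤ 1) ∧ (∀ e, e ∉ E → w e = 0) ∧
    ∀ v : V, ∑ e ∈ Finset.univ.filter (fun e => v ∈ e), w e ≤ 1

section Hypergraph

variable {V : Type*}

def IsFracCover (E : Finset (Finset V)) (t : V → ℝ) : Prop :=
  (∀ v, 0 ≤ t v) ∧ ∀ e ∈ E, 1 ≤ ∑ v ∈ e, t v

def link [DecidableEq V] (E : Finset (Finset V)) (v : V) : Finset (Finset V) :=
  (E.filter (fun e => v ∈ e)).image (fun e => e.erase v)

section FracMatching

variable [Fintype V] [DecidableEq V]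

theorem isFracMatching_zero (E : Finset (Finset V)) : IsFracMatching E 0 :=
  ⟨fun _ => ⟨le_rfl, zero_le_one⟩, fun _ _ => rfl, fun _ => by simp⟩

theorem IsFracMatching.mul_sum_le {E : Finset (Finset V)} {w : Finset V → ℝ}
    (hw : IsFracMatching E w) {t : V → ℝ} (ht : ∀ v, 0 ≤ t v) {c : ℝ}
    (hc : ∀ e ∈ E, c ≤ ∑ v ∈ e, t v) : c * ∑ e, w e ≤ ∑ v, t v := by
  obtain ⟨hw01, hwE, hdeg⟩ := hw
  calc c * ∑ e, w e = ∑ e, w e * c := by rw [mul_sum]; simp_rw [mul_comm]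
    _ ≤ ∑ e, w e * ∑ v ∈ e, t v := sum_le_sum fun e _ => by
        by_cases he : e ∈ E
        · exact mul_le_mul_of_nonneg_left (hc e he) (hw01 e).1
        · simp [hwE e he]
    _ = ∑ v, t v * ∑ e ∈ univ.filter (fun e => v ∈ e), w e := by
        simp_rw [mul_sum, mul_comm (t _)]
        exact sum_comm' (t' := univ) (s' := fun v => univ.filter (fun e => v ∈ e)) (by simp)
    _ ≤ ∑ v, t v * 1 := sum_le_sum fun v _ => mul_le_mul_of_nonneg_left (hdeg v) (ht v)
    _ = ∑ v, t v := by simp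

theorem IsFracCover.card_div_le_sum {k : ℕ} {E : Finset (Finset V)}
    (hunif : ∀ e ∈ E, e.card = k)
    (hlink : ∀ v : V, ∃ w : Finset V → ℝ,
      IsFracMatching (link E v) w ∧ (Fintype.card V : ℝ) / k ≤ ∑ e : Finset V, w e)
    {t : V → ℝ} (ht : IsFracCover E t) :
    (Fintype.card V : ℝ) / k ≤ ∑ v, t v := by
  obtain ⟨ht0, htE⟩ := ht
  have hsum0 : 0 ≤ ∑ v, t v := sum_nonneg fun v _ => ht0 v
  rcases Nat.eq_zero_or_pos k with rfl | hk
  · simpa using hsum0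
  cases isEmpty_or_nonempty V
  · simp
  obtain ⟨v₀, -, hmin⟩ := univ.exists_min_image t univ_nonempty
  obtain ⟨w, hw, hsize⟩ := hlink v₀
  have hlink_weight : ∀ f ∈ link E v₀, 1 - k * t v₀ ≤ ∑ u ∈ f, (t u - t v₀) := by
    intro f hf
    obtain ⟨e, he, rfl⟩ := mem_image.1 hf
    obtain ⟨heE, hv₀e⟩ := mem_filter.1 he
    rw [sum_erase_eq_sub hv₀e, sum_sub_distrib, sum_const, hunif e heE, nsmul_eq_mul]
    linarith [htE e heE]
  have hweak := hw.mul_sum_le (fun u => sub_nonneg.2 (hmin u (mem_univ u))) hlink_weight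
  rw [sum_sub_distrib, sum_const, card_univ, nsmul_eq_mul] at hweak
  have hmin_sum : Fintype.card V * t v₀ ≤ ∑ v, t v := by
    simpa using card_nsmul_le_sum univ t (t v₀) fun u _ => hmin u (mem_univ u)
  have hβk : (Fintype.card V : ℝ) / k * k = Fintype.card V := div_mul_cancel₀ _ (by positivity)
  rcases le_or_gt 0 (1 - k * t v₀) with hpos | hneg
  · linear_combination mul_le_mul_of_nonneg_left hsize hpos + hweak + t v₀ * hβk
  · nlinarith [ht0 v₀]

def degreeMap : (Finset V → ℝ) →ₗ[ℝ] V → ℝ where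
  toFun w v := ∑ e ∈ univ.filter (fun e => v ∈ e), w e
  map_add' w w' := by ext v; simp [sum_add_distrib]
  map_smul' a w := by ext v; simp [mul_sum]

theorem degreeMap_single (e : Finset V) (β : ℝ) (v : V) :
    degreeMap (Pi.single e β) v = if v ∈ e then β else 0 := by
  simp [degreeMap, sum_pi_single']

theorem isFracMatching_of_degreeMap_le_one {E : Finset (Finset V)} (hE : ∅ ∉ E)
    {w : Finset V → ℝ} (hw0 : ∀ e, 0 ≤ w e) (hwE : ∀ e ∉ E, w e = 0) (hdeg : degreeMap w ≤ 1) :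
    IsFracMatching E w := by
  refine ⟨fun e => ⟨hw0 e, ?_⟩, hwE, hdeg⟩
  by_cases he : e ∈ E
  · obtain ⟨v, hv⟩ := nonempty_iff_ne_empty.2 (ne_of_mem_of_not_mem he hE)
    exact (single_le_sum (fun e _ => hw0 e) (mem_filter.2 ⟨mem_univ e, hv⟩)).trans (hdeg v)
  · simp [hwE e he]

end FracMatching

section Separation

variable [Fintype V]

def edgeWeights (E : Finset (Finset V)) (β : ℝ) : Set (Finset V → ℝ) :=
  {w | (∀ e, 0 ≤ w e) ∧ (∀ e ∉ E, w e = 0) ∧ ∑ e, w e = β}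

theorem convex_edgeWeights (E : Finset (Finset V)) (β : ℝ) : Convex ℝ (edgeWeights E β) := by
  rintro w ⟨hw0, hwE, hwβ⟩ w' ⟨hw'0, hw'E, hw'β⟩ a b ha hb hab
  refine ⟨fun e => ?_, fun e he => ?_, ?_⟩
  · simp only [Pi.add_apply, Pi.smul_apply, smul_eq_mul]
    exact add_nonneg (mul_nonneg ha (hw0 e)) (mul_nonneg hb (hw'0 e))
  · simp [hwE e he, hw'E e he]
  · simp [sum_add_distrib, ← mul_sum, hwβ, hw'β, ← add_mul, hab]

theorem isCompact_edgeWeights (E : Finset (Finset V)) (β : ℝ) :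
    IsCompact (edgeWeights E β) := by
  refine (isCompact_Icc (a := (0 : Finset V → ℝ)) (b := fun _ => β)).of_isClosed_subset ?_ ?_
  · simp only [edgeWeights, Set.ofPred_and, Set.ofPred_forall]
    refine .inter (isClosed_iInter fun e => isClosed_le ?_ ?_)
      (.inter (isClosed_iInter fun e => isClosed_iInter fun _ => isClosed_eq ?_ ?_)
        (isClosed_eq ?_ ?_)) <;> fun_prop
  · rintro w ⟨hw0, -, hwβ⟩
    exact ⟨hw0, fun e => hwβ ▸ single_le_sum (fun e _ => hw0 e) (mem_univ e)⟩

theorem single_mem_edgeWeights [DecidableEq V] {E : Finset (Finset V)} {β : ℝ} (hβ : 0 ≤ β)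
    {e : Finset V} (he : e ∈ E) : Pi.single e β ∈ edgeWeights E β :=
  ⟨fun e' => by by_cases h : e' = e <;> simp [h, hβ],
    fun e' he' => by simp [(ne_of_mem_of_not_mem he he').symm], by simp⟩

theorem apply_eq_sum_mul_apply_single [DecidableEq V] (f : (V → ℝ) →L[ℝ] ℝ) (d : V → ℝ) :
    f d = ∑ v, d v * f (Pi.single v 1) := by
  conv_lhs => rw [← univ_sum_single d]
  simp only [map_sum]
  refine sum_congr rfl fun v _ => ?_
  rw [← smul_eq_mul, ← map_smul, ← Pi.single_smul', smul_eq_mul, mul_one]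

end Separation

theorem apply_single_nonpos_of_lt [DecidableEq V] {f : (V → ℝ) →L[ℝ] ℝ} {a : ℝ}
    (hf : ∀ d ∈ Set.Iic (1 : V → ℝ), a < f d) (v : V) : f (Pi.single v 1) ≤ 0 := by
  by_contra! hpos
  have hs : 0 ≤ (f 1 - a) / f (Pi.single v 1) :=
    div_nonneg (sub_nonneg.2 (hf 1 (Set.mem_Iic.2 le_rfl)).le) hpos.le
  have := hf (1 - ((f 1 - a) / f (Pi.single v 1)) • Pi.single v 1) fun u => by
    by_cases hu : u = v
    · subst hu; simpa using hs
    · simp [hu]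
  rw [map_sub, map_smul, smul_eq_mul, div_mul_cancel₀ _ hpos.ne'] at this
  linarith

section Duality

variable [Fintype V] [DecidableEq V]

theorem exists_degreeMap_le_one_or_exists_nonneg_sum_lt (E : Finset (Finset V))
    {β : ℝ} (hβ : 0 ≤ β) :
    (∃ w ∈ edgeWeights E β, degreeMap w ≤ 1) ∨
      ∃ t : V → ℝ, ∃ c, (∀ v, 0 ≤ t v) ∧ ∑ v, t v < c ∧ ∀ e ∈ E, c < β * ∑ v ∈ e, t v := by
  refine or_iff_not_imp_left.2 fun hno => ?_
  have hdisj : Disjoint (degreeMap '' edgeWeights E β) (Set.Iic 1) := by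
    rw [Set.disjoint_left]
    rintro _ ⟨w, hw, rfl⟩ hle
    exact hno ⟨w, hw, hle⟩
  obtain ⟨f, u, u', hfK, huu', hfC⟩ := geometric_hahn_banach_compact_closed
    ((convex_edgeWeights E β).linear_image degreeMap)
    ((isCompact_edgeWeights E β).image degreeMap.continuous_of_finiteDimensional)
    (convex_Iic 1) isClosed_Iic hdisj
  refine ⟨fun v => -f (Pi.single v 1), -u, fun v => neg_nonneg.2 (apply_single_nonpos_of_lt hfC v),
    ?_, fun e he => ?_⟩
  · have := hfC 1 (Set.mem_Iic.2 le_rfl)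
    rw [apply_eq_sum_mul_apply_single] at this
    simp only [Pi.one_apply, one_mul, sum_neg_distrib, neg_lt_neg_iff] at this ⊢
    linarith
  · have := hfK _ ⟨_, single_mem_edgeWeights hβ he, rfl⟩
    rw [apply_eq_sum_mul_apply_single] at this
    simp only [degreeMap_single, ite_mul, zero_mul, sum_ite_mem, univ_inter, sum_neg_distrib,
      mul_neg, mul_sum, neg_lt_neg_iff] at this ⊢
    linarith

theorem exists_isFracMatching_sum_eq {E : Finset (Finset V)} (hE : ∅ ∉ E) {β : ℝ} (hβ : 0 ≤ β)
    (hcover : ∀ t, IsFracCover E t → β ≤ ∑ v, t v) :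
    ∃ w, IsFracMatching E w ∧ ∑ e, w e = β := by
  rcases hβ.eq_or_lt with rfl | hβ
  · exact ⟨0, isFracMatching_zero E, by simp⟩
  rcases exists_degreeMap_le_one_or_exists_nonneg_sum_lt E hβ.le with
    ⟨w, ⟨hw0, hwE, hwβ⟩, hdeg⟩ | ⟨t, c, ht0, htc, hce⟩
  · exact ⟨w, isFracMatching_of_degreeMap_le_one hE hw0 hwE hdeg, hwβ⟩
  have hc : 0 < c := (sum_nonneg fun v _ => ht0 v).trans_lt htc
  have hcover_scaled : IsFracCover E fun v => β / c * t v := by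
    refine ⟨fun v => by have := ht0 v; positivity, fun e he => ?_⟩
    rw [← mul_sum, div_mul_eq_mul_div, one_le_div hc]
    exact (hce e he).le
  have hβ_le := hcover _ hcover_scaled
  rw [← mul_sum] at hβ_le
  have hlt : β / c * ∑ v, t v < β / c * c := by gcongr
  rw [div_mul_cancel₀ _ hc.ne'] at hlt
  linarith

end Duality

end Hypergraph

/-- If `H` is a `k`-uniform hypergraph on `n` vertices such that for every vertex `v` the
link hypergraph `H(v)` has a fractional matching of size at least `n/k`, then `H` has a
fractional matching of size exactly `n/k` (a perfect fractional matching). -/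
theorem stmt_0 {V : Type*} [Fintype V] [DecidableEq V] (k : ℕ) (E : Finset (Finset V))
    (hunif : ∀ e ∈ E, e.card = k)
    (hlink : ∀ v : V, ∃ w : Finset V → ℝ,
      IsFracMatching ((E.filter (fun e => v ∈ e)).image (fun e => e.erase v)) w ∧
        (Fintype.card V : ℝ) / k ≤ ∑ e : Finset V, w e) :
    ∃ w : Finset V → ℝ, IsFracMatching E w ∧
      ∑ e : Finset V, w e = (Fintype.card V : ℝ) / k := by
  rcases Nat.eq_zero_or_pos k with rfl | hk
  · exact ⟨0, isFracMatching_zero E, by simp⟩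
  have hE : ∅ ∉ E := fun h => hk.ne (by simpa using hunif ∅ h)
  exact exists_isFracMatching_sum_eq hE (by positivity) fun t ht => ht.card_div_le_sum hunif hlink
end

section
/- The maximum number of edges in an oriented graph on n vertices that contains no copy of the transitive tournament on k vertices is exactly t(n, r(k) − 1), where r(k) is the smallest integer m such that every tournament on m vertices contains a transitive tournament on k vertices, and t(n, j) is the number of edges of the Turán graph on n vertices with j parts. -/
open Finset

/-- An oriented graph: at most one directed edge between any pair of vertices. -/
structure OrientedGraph (V : Type*) where
  adj : V → V → Prop
  asymm : ∀ u v, adj u v → ¬ adj v u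

namespace OrientedGraph

variable {V : Type*}

/-- A tournament: a complete oriented graph. -/
def IsTournament (G : OrientedGraph V) : Prop :=
  ∀ u v : V, u ≠ v → G.adj u v ∨ G.adj v u

/-- `U` is the vertex set of a copy of the transitive tournament on `k` vertices in `G`. -/
def IsTTCopy (G : OrientedGraph V) (k : ℕ) (U : Finset V) : Prop :=
  ∃ f : Fin k ↪ V, Finset.univ.map f = U ∧
    ∀ i j : Fin k, i < j → G.adj (f i) (f j)

/-- Total degree of a vertex: the number of edges incident to it. -/
noncomputable def degree [Fintype V] (G : OrientedGraph V) (v : V) : ℕ :=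
  Nat.card {u : V // G.adj v u ∨ G.adj u v}

/-- Minimum total degree. -/
noncomputable def minDegree [Fintype V] (G : OrientedGraph V) : ℕ :=
  sInf (Set.range G.degree)

/-- Number of (directed) edges. -/
noncomputable def edgeCount [Fintype V] (G : OrientedGraph V) : ℕ :=
  Nat.card {p : V × V // G.adj p.1 p.2}

section
variable [Fintype V] [DecidableEq V]

/-- A fractional `T_k`-tiling: a weight function on copies of the transitive tournament
`T_k` such that every vertex has total incident weight at most `1`. -/
def IsFracTiling (G : OrientedGraph V) (k : ℕ) (w : Finset V → ℝ) : Prop :=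
  (∀ U, 0 ≤ w U) ∧ (∀ U, ¬ G.IsTTCopy k U → w U = 0) ∧
    ∀ v : V, ∑ U ∈ Finset.univ.filter (fun U => v ∈ U), w U ≤ 1

/-- A perfect fractional `T_k`-tiling: total weight `n/k`. -/
def HasPerfectFracTiling (G : OrientedGraph V) (k : ℕ) : Prop :=
  ∃ w : Finset V → ℝ, G.IsFracTiling k w ∧
    ∑ U : Finset V, w U = (Fintype.card V : ℝ) / k

/-- A perfect `T_k`-tiling: vertex-disjoint copies of `T_k` covering all vertices. -/
def HasPerfectTiling (G : OrientedGraph V) (k : ℕ) : Prop :=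
  ∃ P : Finset (Finset V), (∀ U ∈ P, G.IsTTCopy k U) ∧
    (P : Set (Finset V)).PairwiseDisjoint id ∧ P.sup id = Finset.univ

end

end OrientedGraph

/-- The oriented Ramsey number `r(k)`: the least `m` such that every tournament on `m`
vertices contains a copy of the transitive tournament `T_k`. -/
noncomputable def oRamsey (k : ℕ) : ℕ :=
  sInf {m | ∀ G : OrientedGraph (Fin m), G.IsTournament → ∃ U, G.IsTTCopy k U}

/-- `trs k`: the least (positive) `n` such that every tournament on `n` vertices has a
perfect fractional `T_k`-tiling. -/
noncomputable def trs (k : ℕ) : ℕ :=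
  sInf {n | 0 < n ∧ ∀ G : OrientedGraph (Fin n), G.IsTournament → G.HasPerfectFracTiling k}

/-- `trInt k`: the least (positive) `n` such that every tournament on `n` vertices has a
perfect `T_k`-tiling. -/
noncomputable def trInt (k : ℕ) : ℕ :=
  sInf {n | 0 < n ∧ ∀ G : OrientedGraph (Fin n), G.IsTournament → G.HasPerfectTiling k}
/-!
The underlying simple graph of a `T_k`-free oriented graph is `K_{r(k)}`-free, since `r(k)`
pairwise adjacent vertices span a tournament, hence a `T_k`; Turán's theorem then bounds the
number of edges by `t(n, r(k) - 1)`. Conversely, blowing up a `T_k`-free tournament on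
`r(k) - 1` vertices into the residue classes of `Fin n` orients the Turán graph, and a `T_k` in
the blow-up would project injectively (vertices of one class are non-adjacent) onto a `T_k` in
the tournament. Finiteness of `r(k)` is Stearns' bound: in a tournament on `2^k` vertices some
vertex has in- or out-degree at least `2^(k-1)`, and induction on `k` gives a `T_(k+1)`.
-/

namespace OrientedGraph

variable {V W : Type*}

lemma irrefl (G : OrientedGraph V) (v : V) : ¬ G.adj v v := fun h => G.asymm v v h h

def comap (G : OrientedGraph W) (φ : V → W) : OrientedGraph V where
  adj u v := G.adj (φ u) (φ v)
  asymm u v := G.asymm (φ u) (φ v)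

@[simp]
lemma comap_adj {G : OrientedGraph W} {φ : V → W} {u v : V} :
    (G.comap φ).adj u v ↔ G.adj (φ u) (φ v) := Iff.rfl

def toSimpleGraph (G : OrientedGraph V) : SimpleGraph V where
  Adj u v := G.adj u v ∨ G.adj v u
  symm := ⟨fun _ _ h => h.symm⟩
  loopless := ⟨fun v h => h.elim (G.irrefl v) (G.irrefl v)⟩

lemma exists_isTTCopy_iff {G : OrientedGraph V} {k : ℕ} :
    (∃ U, G.IsTTCopy k U) ↔ ∃ f : Fin k → V, ∀ i j, i < j → G.adj (f i) (f j) := by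
  refine ⟨fun ⟨_, f, _, hf⟩ => ⟨f, hf⟩, fun ⟨f, hf⟩ => ?_⟩
  have hinj : Function.Injective f := by
    intro i j hij
    by_contra hne
    rcases lt_or_gt_of_ne hne with h | h
    · exact G.irrefl _ (hij ▸ hf i j h)
    · exact G.irrefl _ (hij ▸ hf j i h)
  exact ⟨_, ⟨f, hinj⟩, rfl, hf⟩

lemma exists_isTTCopy_of_comap {G : OrientedGraph W} {φ : V → W} {k : ℕ}
    (h : ∃ U, (G.comap φ).IsTTCopy k U) : ∃ U, G.IsTTCopy k U :=
  have ⟨f, hf⟩ := exists_isTTCopy_iff.1 h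
  exists_isTTCopy_iff.2 ⟨φ ∘ f, hf⟩

lemma exists_isTTCopy_of_pairwise {G : OrientedGraph V} {l : List V} (hl : l.Pairwise G.adj) :
    ∃ U, G.IsTTCopy l.length U :=
  exists_isTTCopy_iff.2 ⟨l.get, List.pairwise_iff_get.1 hl⟩

lemma exists_pairwise_adj_of_two_pow_le {G : OrientedGraph V} (k : ℕ)
    {S : Finset V} (hS : G.toSimpleGraph.IsClique (S : Set V)) (hcard : 2 ^ k ≤ #S) :
    ∃ l : List V, l.length = k + 1 ∧ (∀ v ∈ l, v ∈ S) ∧ l.Pairwise G.adj := by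
  classical
  induction k generalizing S with
  | zero =>
    obtain ⟨v, hv⟩ : S.Nonempty := Finset.card_pos.1 hcard
    exact ⟨[v], rfl, by simpa using hv, List.pairwise_singleton _ _⟩
  | succ k ih =>
    obtain ⟨v, hv⟩ : S.Nonempty := Finset.card_pos.1 (lt_of_lt_of_le (Nat.two_pow_pos _) hcard)
    set A := {u ∈ S | G.adj v u}
    set B := {u ∈ S | G.adj u v}
    have hcover : S.erase v ⊆ A ∪ B := by
      intro u hu
      obtain ⟨hne, huS⟩ := Finset.mem_erase.1 hu
      rcases (hS hv huS hne.symm : G.adj v u ∨ G.adj u v) with h | h <;> simp [A, B, huS, h]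
    have hAB : 2 ^ k ≤ #A ∨ 2 ^ k ≤ #B := by
      have := Finset.card_le_card hcover
      have := Finset.card_union_le A B
      have := Finset.card_erase_add_one hv
      omega
    rcases hAB with hA | hB
    · obtain ⟨l, hlen, hlA, hl⟩ := ih (hS.subset fun _ hu => (Finset.mem_filter.1 hu).1) hA
      have hlA' : ∀ u ∈ l, u ∈ S ∧ G.adj v u := fun u hu => Finset.mem_filter.1 (hlA u hu)
      refine ⟨v :: l, by simp [hlen], ?_,
        List.pairwise_cons.2 ⟨fun u hu => (hlA' u hu).2, hl⟩⟩
      simpa [hv] using fun u hu => (hlA' u hu).1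
    · obtain ⟨l, hlen, hlB, hl⟩ := ih (hS.subset fun _ hu => (Finset.mem_filter.1 hu).1) hB
      have hlB' : ∀ u ∈ l, u ∈ S ∧ G.adj u v := fun u hu => Finset.mem_filter.1 (hlB u hu)
      refine ⟨l ++ [v], by simp [hlen], ?_, List.pairwise_append.2
        ⟨hl, List.pairwise_singleton _ _, by simpa using fun u hu => (hlB' u hu).2⟩⟩
      simpa [or_imp, forall_and, hv] using fun u hu => (hlB' u hu).1

lemma toSimpleGraph_comap_adj {G : OrientedGraph W} (hG : G.IsTournament) {φ : V → W} {u v : V} :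
    (G.comap φ).toSimpleGraph.Adj u v ↔ φ u ≠ φ v := by
  refine ⟨?_, hG _ _⟩
  rintro (h | h) he <;> simp only [comap_adj, he] at h <;> exact G.irrefl _ h

lemma toSimpleGraph_comap_mod_eq_turanGraph {n j : ℕ} (hj : 0 < j) {R : OrientedGraph (Fin j)}
    (hR : R.IsTournament) :
    (R.comap fun u : Fin n => (⟨u % j, Nat.mod_lt _ hj⟩ : Fin j)).toSimpleGraph =
      SimpleGraph.turanGraph n j := by
  ext u v
  rw [toSimpleGraph_comap_adj hR, SimpleGraph.turanGraph_adj, Ne, Fin.mk.injEq]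

lemma edgeCount_eq_card_edgeSet [Fintype V] (G : OrientedGraph V) :
    G.edgeCount = Nat.card G.toSimpleGraph.edgeSet := by
  refine Nat.card_eq_of_bijective
    (fun p => ⟨s(p.1.1, p.1.2), Or.inl p.2⟩) ⟨?_, ?_⟩
  · rintro ⟨⟨a, b⟩, hab⟩ ⟨⟨c, d⟩, hcd⟩ h
    obtain ⟨rfl, rfl⟩ | ⟨rfl, rfl⟩ := Sym2.eq_iff.1 (congrArg Subtype.val h)
    · rfl
    · exact absurd hab (G.asymm _ _ hcd)
  · rintro ⟨e, he⟩
    induction e using Sym2.ind with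
    | _ a b =>
      rcases he with h | h
      · exact ⟨⟨(a, b), h⟩, rfl⟩
      · exact ⟨⟨(b, a), h⟩, Subtype.ext Sym2.eq_swap⟩

lemma cliqueFree_toSimpleGraph {G : OrientedGraph V} {k m : ℕ}
    (hm : ∀ R : OrientedGraph (Fin m), R.IsTournament → ∃ U, R.IsTTCopy k U)
    (hG : ¬ ∃ U, G.IsTTCopy k U) : G.toSimpleGraph.CliqueFree m := by
  intro t ht
  let e : Fin m ≃ t := (Fintype.equivFinOfCardEq (by simpa using ht.2)).symm
  refine hG (exists_isTTCopy_of_comap (φ := fun i => (e i).1) (hm _ fun i j hij => ?_))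
  exact ht.1 (e i).2 (e j).2 fun h => hij (e.injective (Subtype.ext h))

lemma IsTournament.exists_isTTCopy_of_two_pow_le_card [Fintype V] {G : OrientedGraph V}
    (hG : G.IsTournament) {k : ℕ} (hcard : 2 ^ k ≤ Fintype.card V) :
    ∃ U, G.IsTTCopy (k + 1) U := by
  obtain ⟨l, hlen, -, hl⟩ := G.exists_pairwise_adj_of_two_pow_le k (S := Finset.univ)
    (fun u _ v _ huv => hG u v huv) hcard
  exact hlen ▸ exists_isTTCopy_of_pairwise hl

theorem isGreatest_edgeCount_of_tournament {k n j : ℕ} (hj : 0 < j) {R : OrientedGraph (Fin j)}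
    (hR : R.IsTournament) (hRk : ¬ ∃ U, R.IsTTCopy k U)
    (hj1 : ∀ G : OrientedGraph (Fin (j + 1)), G.IsTournament → ∃ U, G.IsTTCopy k U) :
    IsGreatest {m : ℕ | ∃ G : OrientedGraph (Fin n),
        (¬ ∃ U : Finset (Fin n), G.IsTTCopy k U) ∧ m = G.edgeCount}
      (Nat.card (SimpleGraph.turanGraph n j).edgeSet) := by
  classical
  refine ⟨⟨R.comap fun u => ⟨u % j, Nat.mod_lt _ hj⟩,
    fun h => hRk (exists_isTTCopy_of_comap h), ?_⟩, ?_⟩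
  · rw [edgeCount_eq_card_edgeSet, toSimpleGraph_comap_mod_eq_turanGraph hj hR]
  · rintro _ ⟨G, hG, rfl⟩
    rw [edgeCount_eq_card_edgeSet, Nat.card_eq_fintype_card, Nat.card_eq_fintype_card,
      ← SimpleGraph.edgeFinset_card, ← SimpleGraph.edgeFinset_card]
    exact (SimpleGraph.isTuranMaximal_turanGraph hj).2 (cliqueFree_toSimpleGraph hj1 hG)

end OrientedGraph

lemma oRamsey_spec {k : ℕ} (hk : 1 ≤ k) {G : OrientedGraph (Fin (oRamsey k))}
    (hG : G.IsTournament) : ∃ U, G.IsTTCopy k U := by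
  obtain ⟨k, rfl⟩ := Nat.exists_eq_add_of_le' hk
  have hmem := Nat.sInf_mem (s := {m | ∀ G : OrientedGraph (Fin m), G.IsTournament →
    ∃ U, G.IsTTCopy (k + 1) U})
    ⟨2 ^ k, fun _ hG => hG.exists_isTTCopy_of_two_pow_le_card (by simp)⟩
  exact hmem G hG

lemma le_oRamsey {k : ℕ} (hk : 1 ≤ k) : k ≤ oRamsey k := by
  obtain ⟨_, f, -, -⟩ := oRamsey_spec hk (G := ⟨(· < ·), fun _ _ => lt_asymm⟩)
    fun _ _ => lt_or_gt_of_ne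
  simpa using Fintype.card_le_of_embedding f

lemma exists_tournament_of_lt_oRamsey {k m : ℕ} (hm : m < oRamsey k) :
    ∃ R : OrientedGraph (Fin m), R.IsTournament ∧ ¬ ∃ U, R.IsTTCopy k U := by
  simpa using Nat.notMem_of_lt_sInf hm

/-- The maximum number of edges in an oriented graph on `n` vertices containing no copy of
the transitive tournament `T_k` is exactly `t(n, r(k) - 1)`, the number of edges of the
Turán graph on `n` vertices with `r(k) - 1` parts. -/
theorem stmt_3 (k n : ℕ) (hk : 2 ≤ k) :
    IsGreatest {m : ℕ | ∃ G : OrientedGraph (Fin n),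
        (¬ ∃ U : Finset (Fin n), G.IsTTCopy k U) ∧ m = G.edgeCount}
      (Nat.card (SimpleGraph.turanGraph n (oRamsey k - 1)).edgeSet) := by
  have hkr : k ≤ oRamsey k := le_oRamsey (by omega)
  have hspec : ∀ G : OrientedGraph (Fin (oRamsey k)), G.IsTournament → ∃ U, G.IsTTCopy k U :=
    fun _ => oRamsey_spec (by omega)
  obtain ⟨R, hR, hRk⟩ :=
    exists_tournament_of_lt_oRamsey (k := k) (m := oRamsey k - 1) (by omega)
  generalize oRamsey k = r at *
  obtain ⟨j, rfl⟩ : ∃ j, r = j + 1 := ⟨r - 1, by omega⟩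
  exact OrientedGraph.isGreatest_edgeCount_of_tournament (by omega) hR hRk hspec
end

section
/- If a tournament T on 2·r(k−1) − 1 vertices has a vertex u with |N⁺(u)| = |N⁻(u)| = r(k−1) − 1, both N⁺(u) and N⁻(u) induce tournaments with no copy of T_{k−1}, and all edges between N⁺(u) and N⁻(u) are directed from N⁺(u) to N⁻(u), then u is contained in no copy of the transitive tournament T_k in T. In particular, T admits no perfect fractional T_k-tiling. -/
open Finset

/-!
A copy of `T_k` through `u` lists its vertices in order with `u` in some position. If `u` is
first, the remaining `k - 1` vertices form a `T_{k-1}` in `N⁺(u)`; if `u` is last, they form one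
in `N⁻(u)`. Otherwise there are vertices `a → u → b` with `a → b`, while every edge between
`N⁺(u)` and `N⁻(u)` goes the other way.

For the tiling, count incidences: the vertex loads of a fractional `T_k`-tiling sum to `k` times
its total weight, i.e. to `n` if the tiling is perfect, yet every load is at most `1` and the load
of `u` is `0`.
-/

namespace OrientedGraph

variable {V : Type*} {G : OrientedGraph V}

theorem IsTTCopy.card_eq {k : ℕ} {U : Finset V} (h : G.IsTTCopy k U) : #U = k := by
  obtain ⟨f, rfl, -⟩ := h
  simp

theorem isTTCopy_map_trans {k m : ℕ} {f : Fin k ↪ V}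
    (hf : ∀ i j, i < j → G.adj (f i) (f j)) (g : Fin m ↪o Fin k) :
    G.IsTTCopy m (univ.map (g.toEmbedding.trans f)) :=
  ⟨_, rfl, fun _ _ hij => hf _ _ (g.strictMono hij)⟩

theorem notMem_of_isTTCopy {k : ℕ} {u : V}
    (houtfree : ¬ ∃ U : Finset V, (∀ v ∈ U, G.adj u v) ∧ G.IsTTCopy (k - 1) U)
    (hinfree : ¬ ∃ U : Finset V, (∀ v ∈ U, G.adj v u) ∧ G.IsTTCopy (k - 1) U)
    (hcross : ∀ a b : V, G.adj u a → G.adj b u → G.adj a b) {U : Finset V}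
    (hU : G.IsTTCopy k U) : u ∉ U := by
  obtain ⟨f, rfl, hf⟩ := hU
  intro hu
  obtain ⟨i, -, rfl⟩ := mem_map.1 hu
  obtain ⟨m, rfl⟩ : ∃ m, k = m + 1 := Nat.exists_eq_succ_of_ne_zero i.pos.ne'
  rw [Nat.add_sub_cancel] at houtfree hinfree
  by_cases hfirst : i = 0
  · subst hfirst
    refine houtfree ⟨_, ?_, isTTCopy_map_trans hf (Fin.succOrderEmb m)⟩
    simp only [mem_map, mem_univ, true_and, forall_exists_index]
    rintro _ j rfl
    exact hf _ _ (Fin.succ_pos j)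
  by_cases hlast : i = Fin.last m
  · subst hlast
    refine hinfree ⟨_, ?_, isTTCopy_map_trans hf Fin.castSuccOrderEmb⟩
    simp only [mem_map, mem_univ, true_and, forall_exists_index]
    rintro _ j rfl
    exact hf _ _ (Fin.castSucc_lt_last j)
  have hpos : 0 < i := Fin.pos_iff_ne_zero.2 hfirst
  have hlt : i < Fin.last m := Fin.lt_last_iff_ne_last.2 hlast
  exact G.asymm _ _ (hcross _ _ (hf _ _ hlt) (hf _ _ hpos)) (hf _ _ (hpos.trans hlt))

section Tiling

variable [Fintype V] [DecidableEq V] {k : ℕ}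

theorem IsFracTiling.sum_load_eq {w : Finset V → ℝ} (hw : G.IsFracTiling k w) :
    ∑ v, ∑ U ∈ univ.filter (v ∈ ·), w U = k * ∑ U, w U := by
  rw [sum_comm' (t' := univ) (s' := id) (by simp), mul_sum]
  refine sum_congr rfl fun U _ => ?_
  rw [id, sum_const, nsmul_eq_mul]
  by_cases hU : G.IsTTCopy k U
  · rw [hU.card_eq]
  · rw [hw.2.1 U hU, mul_zero, mul_zero]

theorem not_hasPerfectFracTiling_of_notMem (hk : 0 < k) {u : V}
    (hu : ∀ U, G.IsTTCopy k U → u ∉ U) : ¬ G.HasPerfectFracTiling k := by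
  rintro ⟨w, hw, htot⟩
  have hu0 : ∑ U ∈ univ.filter (u ∈ ·), w U = 0 :=
    sum_eq_zero fun U hU => hw.2.1 U fun hc => hu U hc (mem_filter.1 hU).2
  have : (Fintype.card V : ℝ) ≤ Fintype.card V - 1 := calc
    (Fintype.card V : ℝ) = k * ∑ U, w U := by rw [htot]; field_simp
    _ = ∑ v, ∑ U ∈ univ.filter (v ∈ ·), w U := hw.sum_load_eq.symm
    _ = ∑ v ∈ univ.erase u, ∑ U ∈ univ.filter (v ∈ ·), w U := by
      rw [← add_sum_erase _ _ (mem_univ u), hu0, zero_add]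
    _ ≤ ∑ _v ∈ univ.erase u, 1 := sum_le_sum fun v _ => hw.2.2 v
    _ = Fintype.card V - 1 := by
      rw [sum_const, card_erase_of_mem (mem_univ u), card_univ, nsmul_one,
        Nat.cast_pred (Fintype.card_pos_iff.2 ⟨u⟩)]
  linarith

end Tiling

end OrientedGraph

theorem stmt_4_general (k : ℕ) (hk : 3 ≤ k) {V : Type*} [Fintype V] [DecidableEq V]
    (G : OrientedGraph V) (u : V)
    (houtfree : ¬ ∃ U : Finset V, (∀ v ∈ U, G.adj u v) ∧ G.IsTTCopy (k - 1) U)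
    (hinfree : ¬ ∃ U : Finset V, (∀ v ∈ U, G.adj v u) ∧ G.IsTTCopy (k - 1) U)
    (hcross : ∀ a b : V, G.adj u a → G.adj b u → G.adj a b) :
    (¬ ∃ U : Finset V, G.IsTTCopy k U ∧ u ∈ U) ∧ ¬ G.HasPerfectFracTiling k := by
  have hu : ∀ U, G.IsTTCopy k U → u ∉ U := fun _ =>
    OrientedGraph.notMem_of_isTTCopy houtfree hinfree hcross
  exact ⟨fun ⟨U, hU, huU⟩ => hu U hU huU,
    OrientedGraph.not_hasPerfectFracTiling_of_notMem (by omega) hu⟩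

/-- If a tournament `T` on `2·r(k-1) - 1` vertices has a vertex `u` with
`|N⁺(u)| = |N⁻(u)| = r(k-1) - 1`, both neighbourhoods inducing `T_{k-1}`-free tournaments,
and all edges between `N⁺(u)` and `N⁻(u)` directed from `N⁺(u)` to `N⁻(u)`, then `u` lies
in no copy of `T_k`; in particular `T` has no perfect fractional `T_k`-tiling. -/
theorem stmt_4 (k : ℕ) (hk : 3 ≤ k) {V : Type*} [Fintype V] [DecidableEq V]
    (G : OrientedGraph V) (hT : G.IsTournament)
    (hcard : Fintype.card V = 2 * oRamsey (k - 1) - 1) (u : V)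
    (hout : Nat.card {v : V // G.adj u v} = oRamsey (k - 1) - 1)
    (hin : Nat.card {v : V // G.adj v u} = oRamsey (k - 1) - 1)
    (houtfree : ¬ ∃ U : Finset V, (∀ v ∈ U, G.adj u v) ∧ G.IsTTCopy (k - 1) U)
    (hinfree : ¬ ∃ U : Finset V, (∀ v ∈ U, G.adj v u) ∧ G.IsTTCopy (k - 1) U)
    (hcross : ∀ a b : V, G.adj u a → G.adj b u → G.adj a b) :
    (¬ ∃ U : Finset V, G.IsTTCopy k U ∧ u ∈ U) ∧ ¬ G.HasPerfectFracTiling k :=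
  stmt_4_general k hk G u houtfree hinfree hcross
end

section
/- For every k ≥ 3 and every n with r(k) ≤ n ≤ (k/(k−2))·(r(k) − 2), there exists a tournament T on n vertices whose maximum fractional T_k-tiling has size at most (n − (r(k) − 2))/2. -/
open Finset

/-!
Blow up one vertex of a `T_k`-free tournament `H` on `r(k) - 1` vertices into a transitive
set `X` of `n - (r(k) - 2)` vertices (below, `Fin.clamp` collapses `X = {r(k) - 2, …, n - 1}`
onto that vertex). A copy of `T_k` with at most one vertex in `X` meets every fibre of the
blow-up at most once, so it would project to a copy of `T_k` in `H`. Hence every copy has at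
least two vertices in `X`, and double counting the weight over `X` bounds twice the total
weight of a fractional tiling by `|X|`.
-/

namespace OrientedGraph

variable {V W : Type*}

def blowup [LinearOrder V] (H : OrientedGraph W) (π : V → W) : OrientedGraph V where
  adj u v := (π u = π v ∧ u < v) ∨ (π u ≠ π v ∧ H.adj (π u) (π v))
  asymm := by
    rintro u v (⟨he, hlt⟩ | ⟨hne, ha⟩) (⟨he', hlt'⟩ | ⟨hne', ha'⟩)
    · exact hlt.asymm hlt'
    · exact hne' he.symm
    · exact hne he'.symm
    · exact H.asymm _ _ ha ha'

theorem IsTournament.blowup [LinearOrder V] {H : OrientedGraph W} (hH : H.IsTournament)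
    (π : V → W) : (H.blowup π).IsTournament := by
  intro u v huv
  by_cases hp : π u = π v
  · rcases huv.lt_or_gt with h | h
    · exact Or.inl (Or.inl ⟨hp, h⟩)
    · exact Or.inr (Or.inl ⟨hp.symm, h⟩)
  · rcases hH _ _ hp with h | h
    · exact Or.inl (Or.inr ⟨hp, h⟩)
    · exact Or.inr (Or.inr ⟨Ne.symm hp, h⟩)

theorem IsTTCopy.exists_ne_map_eq_of_blowup [LinearOrder V] {H : OrientedGraph W}
    {π : V → W} {k : ℕ} {U : Finset V} (hU : (H.blowup π).IsTTCopy k U)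
    (hH : ∀ U', ¬ H.IsTTCopy k U') : ∃ a ∈ U, ∃ b ∈ U, a ≠ b ∧ π a = π b := by
  obtain ⟨f, rfl, hf⟩ := hU
  by_contra! hU
  have hinj : Function.Injective (π ∘ f) := fun i j hij => by
    by_contra hne
    exact hU _ (mem_map_of_mem f (mem_univ i)) _ (mem_map_of_mem f (mem_univ j))
      (f.injective.ne hne) hij
  refine hH _ ⟨⟨π ∘ f, hinj⟩, rfl, fun i j hij => ?_⟩
  rcases hf i j hij with ⟨he, -⟩ | ⟨-, ha⟩
  · exact absurd he (hinj.ne hij.ne)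
  · exact ha

theorem IsFracTiling.mul_sum_le_card [Fintype V] [DecidableEq V] {G : OrientedGraph V}
    {k c : ℕ} {w : Finset V → ℝ} (hw : G.IsFracTiling k w) (X : Finset V)
    (hX : ∀ U, G.IsTTCopy k U → c ≤ #(X ∩ U)) : c * ∑ U, w U ≤ #X := by
  obtain ⟨hw0, hwz, hwv⟩ := hw
  have hweight : ∀ U, (c : ℝ) * w U ≤ #(X ∩ U) * w U := fun U => by
    by_cases hU : G.IsTTCopy k U
    · exact mul_le_mul_of_nonneg_right (by exact_mod_cast hX U hU) (hw0 U)
    · simp [hwz U hU]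
  have hdouble : ∑ U, (#(X ∩ U) : ℝ) * w U = ∑ v ∈ X, ∑ U with v ∈ U, w U := by
    simp_rw [sum_filter, ← filter_mem_eq_inter, ← sum_boole, sum_mul, ite_mul, one_mul,
      zero_mul]
    exact sum_comm
  calc (c : ℝ) * ∑ U, w U
      ≤ ∑ U, (#(X ∩ U) : ℝ) * w U := by rw [mul_sum]; exact sum_le_sum fun U _ => hweight U
    _ = ∑ v ∈ X, ∑ U with v ∈ U, w U := hdouble
    _ ≤ ∑ _v ∈ X, 1 := sum_le_sum fun v _ => hwv v
    _ = #X := by simp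

end OrientedGraph

theorem exists_isTournament_forall_not_isTTCopy_of_lt_oRamsey {k m : ℕ} (hm : m < oRamsey k) :
    ∃ H : OrientedGraph (Fin m), H.IsTournament ∧ ∀ U, ¬ H.IsTTCopy k U := by
  simpa using Nat.notMem_of_lt_sInf hm

theorem Fin.le_of_clamp_eq_of_ne {a b m : ℕ} (h : Fin.clamp a m = Fin.clamp b m) (hab : a ≠ b) :
    m ≤ a := by
  simp only [Fin.clamp, Fin.mk.injEq] at h
  omega

/-- For `k ≥ 3` and `r(k) ≤ n ≤ (k/(k-2))·(r(k) - 2)`, there is a tournament on `n`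
vertices whose maximum fractional `T_k`-tiling has size at most `(n - (r(k) - 2))/2`. -/
theorem stmt_8 (k n : ℕ) (hk : 3 ≤ k) (h1 : oRamsey k ≤ n)
    (h2 : (n : ℝ) ≤ ((k : ℝ) / ((k : ℝ) - 2)) * ((oRamsey k : ℝ) - 2)) :
    ∃ G : OrientedGraph (Fin n), G.IsTournament ∧
      ∀ w : Finset (Fin n) → ℝ, G.IsFracTiling k w →
        ∑ U : Finset (Fin n), w U ≤ ((n : ℝ) - ((oRamsey k : ℝ) - 2)) / 2 := by
  have hr : 2 ≤ oRamsey k := by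
    by_contra! hr
    have hk' : (0 : ℝ) < k / (k - 2) := div_pos (by positivity) (by norm_num; omega)
    have hr' : (oRamsey k : ℝ) < 2 := by exact_mod_cast hr
    linarith [mul_neg_of_pos_of_neg hk' (sub_neg.2 hr'), (n.cast_nonneg : (0 : ℝ) ≤ n)]
  set m := oRamsey k - 2
  obtain ⟨H, hH, hHfree⟩ :=
    exists_isTournament_forall_not_isTTCopy_of_lt_oRamsey (k := k) (m := m + 1) (by omega)
  let π : Fin n → Fin (m + 1) := fun i => Fin.clamp i m
  let X : Finset (Fin n) := Ici ⟨m, by omega⟩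
  refine ⟨H.blowup π, hH.blowup π, fun w hw => ?_⟩
  have hcover : ∀ U, (H.blowup π).IsTTCopy k U → 2 ≤ #(X ∩ U) := fun U hU => by
    obtain ⟨a, ha, b, hb, hab, hπ⟩ := hU.exists_ne_map_eq_of_blowup hHfree
    have hab' : (a : ℕ) ≠ b := Fin.val_ne_of_ne hab
    refine one_lt_card.2 ⟨a, ?_, b, ?_, hab⟩ <;> simp only [mem_inter, mem_Ici, Fin.le_def, X]
    · exact ⟨Fin.le_of_clamp_eq_of_ne hπ hab', ha⟩
    · exact ⟨Fin.le_of_clamp_eq_of_ne hπ.symm hab'.symm, hb⟩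
  have hX : (#X : ℝ) = n - (oRamsey k - 2) := by
    rw [Fin.card_Ici, Nat.cast_sub (by omega), Nat.cast_sub hr]
    rfl
  have htiling := hw.mul_sum_le_card X hcover
  push_cast at htiling
  linarith
end

section
/- Let k ≥ 3, let G and F be directed graphs (or graphs) with |G| = n and |F| = k, and let H_F(G) be the k-uniform hypergraph of copies of F in G. If for every vertex v ∈ V(G) the link hypergraph of v in H_F(G) has a fractional matching of size at least n/k, then G has a perfect fractional F-tiling. -/
open Finset

/-- `U` is the vertex set of a copy of the directed graph `F` in the directed graph `G`,
i.e. a `|V(F)|`-set such that `G[U]` contains a copy of `F`. -/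
def IsCopyOf {VF V : Type*} [Fintype VF] [DecidableEq V]
    (F : VF → VF → Prop) (G : V → V → Prop) (U : Finset V) : Prop :=
  ∃ f : VF → V, Function.Injective f ∧ Finset.univ.image f = U ∧
    ∀ a b : VF, F a b → G (f a) (f b)

section Aux

variable {V : Type*} [Fintype V] [DecidableEq V]

/-- total sum of the lift of a link weighting equals total sum of the link weighting -/
lemma lift_total (v : V) (wv : Finset V → ℝ)
    (hz : ∀ e : Finset V, v ∈ e → wv e = 0) :
    ∑ U : Finset V, (if v ∈ U then wv (U.erase v) else 0) = ∑ e : Finset V, wv e := by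
  rw [← Finset.sum_filter]
  rw [show (∑ e : Finset V, wv e) = ∑ e ∈ Finset.univ.filter (fun e => v ∉ e), wv e by
    rw [Finset.sum_filter]
    refine Finset.sum_congr rfl fun e _ => ?_
    by_cases h : v ∈ e
    · simp [h, hz e h]
    · simp [h]]
  refine Finset.sum_nbij' (fun U => U.erase v) (fun e => insert v e) ?_ ?_ ?_ ?_ ?_
  · intro U hU; simp only [Finset.mem_filter, Finset.mem_univ, true_and] at *
    exact Finset.notMem_erase v U
  · intro e he; simp only [Finset.mem_filter, Finset.mem_univ, true_and] at *
    exact Finset.mem_insert_self v e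
  · intro U hU; simp only [Finset.mem_filter, Finset.mem_univ, true_and] at hU
    exact Finset.insert_erase hU
  · intro e he; simp only [Finset.mem_filter, Finset.mem_univ, true_and] at he
    exact Finset.erase_insert he
  · intro U hU; rfl

/-- degree of the lift at `u ≠ v` is at most the link degree of `u` -/
lemma lift_deg (v u : V) (hu : u ≠ v) (wv : Finset V → ℝ) (h0 : ∀ e, 0 ≤ wv e) :
    ∑ U ∈ Finset.univ.filter (fun U : Finset V => u ∈ U), (if v ∈ U then wv (U.erase v) else 0)
      ≤ ∑ e ∈ Finset.univ.filter (fun e => u ∈ e), wv e := by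
  rw [← Finset.sum_filter, Finset.filter_filter]
  set A : Finset (Finset V) := Finset.univ.filter (fun U => u ∈ U ∧ v ∈ U) with hA
  have hinj : Set.InjOn (fun U => Finset.erase U v) A := by
    intro U hU U' hU' h
    simp only [hA, Finset.coe_filter, Set.mem_setOf_eq, Finset.mem_univ, true_and] at hU hU'
    have := congrArg (insert v) h
    simpa [Finset.insert_erase hU.2, Finset.insert_erase hU'.2] using this
  calc ∑ U ∈ A, wv (U.erase v)
      = ∑ e ∈ A.image (fun U => U.erase v), wv e := (Finset.sum_image
        (fun U hU U' hU' h => hinj (by simpa using hU) (by simpa using hU') h)).symm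
    _ ≤ ∑ e ∈ Finset.univ.filter (fun e => u ∈ e), wv e := by
        refine Finset.sum_le_sum_of_subset_of_nonneg ?_ (fun e _ _ => h0 e)
        intro e he
        simp only [Finset.mem_image, hA, Finset.mem_filter, Finset.mem_univ, true_and] at he ⊢
        obtain ⟨U, ⟨huU, hvU⟩, rfl⟩ := he
        exact Finset.mem_erase.2 ⟨hu, huU⟩

/-- degree at v of the lift is the total sum -/
lemma lift_deg_self (v : V) (wv : Finset V → ℝ) :
    ∑ U ∈ Finset.univ.filter (fun U : Finset V => v ∈ U), (if v ∈ U then wv (U.erase v) else 0)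
      = ∑ U : Finset V, (if v ∈ U then wv (U.erase v) else 0) := by
  rw [Finset.sum_filter]
  refine Finset.sum_congr rfl fun U _ => ?_
  by_cases h : v ∈ U <;> simp [h]

/-- double counting: k times the total weight is the sum of degrees -/
lemma double_count (k : ℕ) (w : Finset V → ℝ) (hcard : ∀ U : Finset V, w U ≠ 0 → U.card = k) :
    (k : ℝ) * ∑ U : Finset V, w U
      = ∑ u : V, ∑ U ∈ Finset.univ.filter (fun U => u ∈ U), w U := by
  have h1 : ∀ u : V, ∑ U ∈ Finset.univ.filter (fun U => u ∈ U), w U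
      = ∑ U : Finset V, if u ∈ U then w U else 0 := fun u => Finset.sum_filter _ _
  simp only [h1]
  rw [Finset.sum_comm, Finset.mul_sum]
  refine Finset.sum_congr rfl fun U _ => ?_
  rw [Finset.sum_ite_mem, Finset.univ_inter, Finset.sum_const, nsmul_eq_mul]
  by_cases h : w U = 0
  · simp [h]
  · rw [hcard U h]

end Aux


/-- If for every vertex `v` of `G` the link hypergraph of `v` in `H_F(G)` has a fractional
matching of size at least `n/k`, then `G` has a perfect fractional `F`-tiling. -/
theorem stmt_16 {VF V : Type*} [Fintype VF] [Fintype V] [DecidableEq V]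
    (k : ℕ) (hk : 3 ≤ k) (hcard : Fintype.card VF = k)
    (F : VF → VF → Prop) (G : V → V → Prop)
    (hlink : ∀ v : V, ∃ w : Finset V → ℝ,
      (∀ e, 0 ≤ w e ∧ w e ≤ 1) ∧
      (∀ e : Finset V, w e ≠ 0 → ∃ U : Finset V, IsCopyOf F G U ∧ v ∈ U ∧ e = U.erase v) ∧
      (∀ u : V, ∑ e ∈ Finset.univ.filter (fun e => u ∈ e), w e ≤ 1) ∧
      (Fintype.card V : ℝ) / k ≤ ∑ e : Finset V, w e) :
    ∃ w : Finset V → ℝ,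
      (∀ U, 0 ≤ w U ∧ w U ≤ 1) ∧
      (∀ U : Finset V, ¬ IsCopyOf F G U → w U = 0) ∧
      (∀ u : V, ∑ U ∈ Finset.univ.filter (fun U => u ∈ U), w U ≤ 1) ∧
      ∑ U : Finset V, w U = (Fintype.card V : ℝ) / k := by
  classical
  have hk0 : (0 : ℝ) < k := by exact_mod_cast Nat.lt_of_lt_of_le (by norm_num) hk
  set n : ℕ := Fintype.card V with hn
  have hcopycard : ∀ U : Finset V, IsCopyOf F G U → U.card = k := by
    rintro U ⟨f, hf, hU, -⟩
    rw [← hU, Finset.card_image_of_injective _ hf, Finset.card_univ, hcard]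
  -- the feasible set
  set K : Set (Finset V → ℝ) := {w | (∀ U, 0 ≤ w U ∧ w U ≤ 1) ∧
    (∀ U, ¬ IsCopyOf F G U → w U = 0) ∧
    ∀ u : V, ∑ U ∈ Finset.univ.filter (fun U => u ∈ U), w U ≤ 1} with hKdef
  -- upper bound for any feasible w
  have hub : ∀ w, w ∈ K → ∑ U : Finset V, w U ≤ (n : ℝ) / k := by
    rintro w ⟨h01, hsupp, hdeg⟩
    have hcards : ∀ U : Finset V, w U ≠ 0 → U.card = k := by
      intro U hU
      by_contra h
      exact hU (hsupp U (fun hc => h (hcopycard U hc)))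
    have key := double_count k w hcards
    have hsum : ∑ u : V, ∑ U ∈ Finset.univ.filter (fun U => u ∈ U), w U ≤ (n : ℝ) := by
      calc ∑ u : V, ∑ U ∈ Finset.univ.filter (fun U => u ∈ U), w U
          ≤ ∑ _u : V, (1 : ℝ) := Finset.sum_le_sum (fun u _ => hdeg u)
        _ = (n : ℝ) := by simp [hn]
    rw [le_div_iff₀ hk0]
    linarith [key]
  -- K is compact and nonempty
  have hKsub : K ⊆ Set.Icc (0 : Finset V → ℝ) 1 := by
    rintro w ⟨h01, -, -⟩
    exact ⟨fun U => (h01 U).1, fun U => (h01 U).2⟩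
  have hKclosed : IsClosed K := by
    have h1 : IsClosed {w : Finset V → ℝ | ∀ U, 0 ≤ w U ∧ w U ≤ 1} := by
      have : {w : Finset V → ℝ | ∀ U, 0 ≤ w U ∧ w U ≤ 1}
          = ⋂ U : Finset V, ({w | 0 ≤ w U} ∩ {w | w U ≤ 1}) := by
        ext w; simp [Set.mem_iInter, forall_and]
      rw [this]
      exact isClosed_iInter fun U => (isClosed_le continuous_const (continuous_apply U)).inter
        (isClosed_le (continuous_apply U) continuous_const)
    have h2 : IsClosed {w : Finset V → ℝ | ∀ U, ¬ IsCopyOf F G U → w U = 0} := by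
      have : {w : Finset V → ℝ | ∀ U, ¬ IsCopyOf F G U → w U = 0}
          = ⋂ U ∈ {U : Finset V | ¬ IsCopyOf F G U}, {w | w U = 0} := by
        ext w; simp
      rw [this]
      exact isClosed_biInter fun U _ => isClosed_eq (continuous_apply U) continuous_const
    have h3 : IsClosed {w : Finset V → ℝ |
        ∀ u : V, ∑ U ∈ Finset.univ.filter (fun U => u ∈ U), w U ≤ 1} := by
      have : {w : Finset V → ℝ | ∀ u : V, ∑ U ∈ Finset.univ.filter (fun U => u ∈ U), w U ≤ 1}
          = ⋂ u : V, {w | ∑ U ∈ Finset.univ.filter (fun U => u ∈ U), w U ≤ 1} := by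
        ext w; simp [Set.mem_iInter]
      rw [this]
      exact isClosed_iInter fun u => isClosed_le
        (continuous_finset_sum _ fun U _ => continuous_apply U) continuous_const
    have : K = {w : Finset V → ℝ | ∀ U, 0 ≤ w U ∧ w U ≤ 1}
        ∩ ({w | ∀ U, ¬ IsCopyOf F G U → w U = 0}
          ∩ {w | ∀ u : V, ∑ U ∈ Finset.univ.filter (fun U => u ∈ U), w U ≤ 1}) := by
      ext w
      simp only [hKdef, Set.mem_setOf_eq, Set.mem_inter_iff]
    rw [this]
    exact h1.inter (h2.inter h3)
  have hIcc : IsCompact (Set.Icc (0 : Finset V → ℝ) 1) := by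
    rw [← Set.pi_univ_Icc]
    exact isCompact_univ_pi (fun _ => isCompact_Icc)
  have hKcompact : IsCompact K := hIcc.of_isClosed_subset hKclosed hKsub
  have hKne : K.Nonempty := ⟨0, fun U => by norm_num, fun U _ => rfl, fun u => by simp⟩
  obtain ⟨w, hwK, hwmax⟩ := hKcompact.exists_isMaxOn hKne
    ((continuous_finset_sum _ fun U _ => continuous_apply U).continuousOn :
      ContinuousOn (fun w : Finset V → ℝ => ∑ U : Finset V, w U) K)
  obtain ⟨hw01, hwsupp, hwdeg⟩ := hwK
  -- lower bound: the maximum is at least n/k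
  have hlb : (n : ℝ) / k ≤ ∑ U : Finset V, w U := by
    by_contra hlt
    push_neg at hlt
    -- find a vertex of degree < 1
    have hcards : ∀ U : Finset V, w U ≠ 0 → U.card = k := by
      intro U hU
      by_contra h
      exact hU (hwsupp U (fun hc => h (hcopycard U hc)))
    have key := double_count k w hcards
    have hdegsum : ∑ u : V, ∑ U ∈ Finset.univ.filter (fun U => u ∈ U), w U < (n : ℝ) := by
      rw [← key]
      calc (k : ℝ) * ∑ U : Finset V, w U < (k : ℝ) * ((n : ℝ) / k) := by
            exact mul_lt_mul_of_pos_left hlt hk0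
        _ = (n : ℝ) := by field_simp
    have hv : ∃ v : V, ∑ U ∈ Finset.univ.filter (fun U => v ∈ U), w U < 1 := by
      by_contra h
      push_neg at h
      have : (n : ℝ) ≤ ∑ u : V, ∑ U ∈ Finset.univ.filter (fun U => u ∈ U), w U := by
        calc (n : ℝ) = ∑ _u : V, (1 : ℝ) := by simp [hn]
          _ ≤ _ := Finset.sum_le_sum (fun u _ => h u)
      linarith
    obtain ⟨v, hvdeg⟩ := hv
    obtain ⟨wv, hv01, hvsupp, hvdegs, hvsize⟩ := hlink v
    -- wv vanishes on edges containing v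
    have hvz : ∀ e : Finset V, v ∈ e → wv e = 0 := by
      intro e hve
      by_contra h
      obtain ⟨U, -, -, rfl⟩ := hvsupp e h
      exact Finset.notMem_erase v U hve
    -- the lifted weighting
    set w' : Finset V → ℝ := fun U => if v ∈ U then wv (U.erase v) else 0 with hw'def
    have hw'01 : ∀ U, 0 ≤ w' U ∧ w' U ≤ 1 := by
      intro U
      by_cases h : v ∈ U <;> simp [hw'def, h, hv01 (U.erase v)]
    have hw'supp : ∀ U, ¬ IsCopyOf F G U → w' U = 0 := by
      intro U hU
      by_cases h : v ∈ U
      · simp only [hw'def, if_pos h]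
        by_contra hne
        obtain ⟨U', hU', hvU', heq⟩ := hvsupp _ hne
        have : U = U' := by
          have := congrArg (insert v) heq
          rwa [Finset.insert_erase h, Finset.insert_erase hvU'] at this
        exact hU (this ▸ hU')
      · simp [hw'def, h]
    set s : ℝ := ∑ U : Finset V, w' U with hsdef
    have hs : (n : ℝ) / k ≤ s := by
      rw [hsdef, hw'def, lift_total v wv hvz]
      exact hvsize
    have hw'deg : ∀ u : V, u ≠ v →
        ∑ U ∈ Finset.univ.filter (fun U => u ∈ U), w' U ≤ 1 := by
      intro u hu
      calc ∑ U ∈ Finset.univ.filter (fun U => u ∈ U), w' U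
          ≤ ∑ e ∈ Finset.univ.filter (fun e => u ∈ e), wv e :=
            lift_deg v u hu wv (fun e => (hv01 e).1)
        _ ≤ 1 := hvdegs u
    have hw'degv : ∑ U ∈ Finset.univ.filter (fun U => v ∈ U), w' U = s := by
      rw [hsdef, hw'def]
      exact lift_deg_self v wv
    -- the degree of w at v and total sum of w
    set d : ℝ := ∑ U ∈ Finset.univ.filter (fun U => v ∈ U), w U with hddef
    set S : ℝ := ∑ U : Finset V, w U with hSdef
    have hdS : d ≤ S := Finset.sum_le_sum_of_subset_of_nonneg
      (Finset.filter_subset _ _) (fun U _ _ => (hw01 U).1)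
    have hsd : d < s := by
      calc d ≤ S := hdS
        _ < (n : ℝ) / k := hlt
        _ ≤ s := hs
    have hd1 : d < 1 := hvdeg
    -- combination parameter
    set t : ℝ := min 1 ((1 - d) / (s - d)) with htdef
    have ht0 : 0 < t := lt_min one_pos (div_pos (by linarith) (by linarith))
    have ht1 : t ≤ 1 := min_le_left _ _
    have htb : t * (s - d) ≤ 1 - d := by
      have h := min_le_right 1 ((1 - d) / (s - d))
      calc t * (s - d) ≤ ((1 - d) / (s - d)) * (s - d) :=
            mul_le_mul_of_nonneg_right h (by linarith)
        _ = 1 - d := div_mul_cancel₀ _ (sub_ne_zero_of_ne (ne_of_gt hsd))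
    -- new feasible weighting
    set f : Finset V → ℝ := fun U => (1 - t) * w U + t * w' U with hfdef
    have hfK : f ∈ K := by
      refine ⟨?_, ?_, ?_⟩
      · intro U
        simp only [hfdef]
        constructor
        · exact add_nonneg (mul_nonneg (by linarith) (hw01 U).1)
            (mul_nonneg (by linarith) (hw'01 U).1)
        · nlinarith [(hw01 U).1, (hw01 U).2, (hw'01 U).1, (hw'01 U).2, ht0, ht1]
      · intro U hU
        simp [hfdef, hwsupp U hU, hw'supp U hU]
      · intro u
        have hsplit : ∑ U ∈ Finset.univ.filter (fun U => u ∈ U), f U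
            = (1 - t) * (∑ U ∈ Finset.univ.filter (fun U => u ∈ U), w U)
              + t * (∑ U ∈ Finset.univ.filter (fun U => u ∈ U), w' U) := by
          simp only [hfdef]
          rw [Finset.sum_add_distrib, Finset.mul_sum, Finset.mul_sum]
        rw [hsplit]
        by_cases hu : u = v
        · subst hu
          rw [hw'degv, ← hddef]
          nlinarith [htb]
        · have h1 := hwdeg u
          have h2 := hw'deg u hu
          nlinarith
    have hfsum : ∑ U : Finset V, f U = (1 - t) * S + t * s := by
      simp only [hfdef, hSdef, hsdef]
      rw [Finset.sum_add_distrib, ← Finset.mul_sum, ← Finset.mul_sum]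
    have hSs : S < s := lt_of_lt_of_le hlt hs
    have : ∑ U : Finset V, f U ≤ S := hwmax hfK
    rw [hfsum] at this
    nlinarith
  refine ⟨w, hw01, hwsupp, hwdeg, le_antisymm (hub w ⟨hw01, hwsupp, hwdeg⟩) hlb⟩
end

section
/- In the setting of Lemma 5.3's configuration: let K be a tournament partitioned into four parts N^{++}, N^{+-}, N^{-+}, N^{--} with the partial order N^{--} < N^{-+} < N^{++} and N^{--} < N^{+-} < N^{++} (with N^{-+}, N^{+-} incomparable). Suppose every transitive triangle of K contains an edge violating the partial order (an edge between incomparable parts, or an edge between comparable parts directed from the larger to the smaller part). Then for every pair of distinct comparable parts U, W, the set of edges between U and W that satisfy the partial order forms a matching. -/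
open Finset

/-- The strict partial order on the four parts `0 = N⁻⁻`, `1 = N⁻⁺`, `2 = N⁺⁻`, `3 = N⁺⁺`:
`N⁻⁻ < N⁻⁺ < N⁺⁺` and `N⁻⁻ < N⁺⁻ < N⁺⁺`, with `N⁻⁺, N⁺⁻` incomparable. -/
def POlt (a b : Fin 4) : Prop := (a = 0 ∧ b ≠ 0) ∨ (a ≠ 3 ∧ b = 3)

/-- The edge between `u` and `w` (lying in distinct parts) violates the partial order:
its parts are incomparable, or they are comparable and the edge goes downward. -/
def Violates {V : Type*} (K : OrientedGraph V) (lbl : V → Fin 4) (u w : V) : Prop :=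
  lbl u ≠ lbl w ∧
    ¬ ((POlt (lbl u) (lbl w) ∧ K.adj u w) ∨ (POlt (lbl w) (lbl u) ∧ K.adj w u))

/-! Two order-respecting edges sharing an endpoint, together with the tournament edge joining
their other endpoints (which lie in one part, so that edge violates nothing), would form a
transitive triangle without a violating edge. -/

namespace Violates

variable {V : Type*} {K : OrientedGraph V} {lbl : V → Fin 4}

theorem not_of_label_eq {a b : V} (h : lbl a = lbl b) : ¬ Violates K lbl a b :=
  fun hv => hv.1 h

theorem not_of_POlt {a b : V} (h : POlt (lbl a) (lbl b)) (hab : K.adj a b) :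
    ¬ Violates K lbl a b :=
  fun hv => hv.2 (Or.inl ⟨h, hab⟩)

theorem eq_of_adj_of_adj_of_label_eq (hT : K.IsTournament)
    (hviol : ∀ a b c : V, K.adj a b → K.adj a c → K.adj b c →
      Violates K lbl a b ∨ Violates K lbl a c ∨ Violates K lbl b c)
    {u w w' : V} (hww' : lbl w = lbl w')
    (huw : K.adj u w) (huw' : K.adj u w')
    (hsw : ¬ Violates K lbl u w) (hsw' : ¬ Violates K lbl u w') : w = w' := by
  by_contra hne
  rcases hT w w' hne with h | h
  · rcases hviol u w w' huw huw' h with hv | hv | hv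
    exacts [hsw hv, hsw' hv, not_of_label_eq hww' hv]
  · rcases hviol u w' w huw' huw h with hv | hv | hv
    exacts [hsw' hv, hsw hv, not_of_label_eq hww'.symm hv]

theorem eq_of_adj_of_adj_of_label_eq' (hT : K.IsTournament)
    (hviol : ∀ a b c : V, K.adj a b → K.adj a c → K.adj b c →
      Violates K lbl a b ∨ Violates K lbl a c ∨ Violates K lbl b c)
    {u u' w : V} (huu' : lbl u = lbl u')
    (huw : K.adj u w) (hu'w : K.adj u' w)
    (hsu : ¬ Violates K lbl u w) (hsu' : ¬ Violates K lbl u' w) : u = u' := by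
  by_contra hne
  rcases hT u u' hne with h | h
  · rcases hviol u u' w h huw hu'w with hv | hv | hv
    exacts [not_of_label_eq huu' hv, hsu hv, hsu' hv]
  · rcases hviol u' u w h hu'w huw with hv | hv | hv
    exacts [not_of_label_eq huu'.symm hv, hsu' hv, hsu hv]

end Violates

/-- If every transitive triangle of the tournament `K` contains an edge violating the
partial order, then for every pair of distinct comparable parts the edges between them
satisfying the partial order form a matching. -/
theorem stmt_17 {V : Type*} (K : OrientedGraph V) (hT : K.IsTournament)
    (lbl : V → Fin 4)
    (hviol : ∀ a b c : V, K.adj a b → K.adj a c → K.adj b c →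
      Violates K lbl a b ∨ Violates K lbl a c ∨ Violates K lbl b c) :
    ∀ p q : Fin 4, POlt p q →
      ∀ u u' w w' : V, lbl u = p → lbl u' = p → lbl w = q → lbl w' = q →
        K.adj u w → K.adj u' w' → (u = u' ↔ w = w') := by
  intro p q hpq u u' w w' hu hu' hw hw' huw hu'w'
  have hsat : ∀ {a b : V}, lbl a = p → lbl b = q → K.adj a b → ¬ Violates K lbl a b :=
    fun ha hb hab => Violates.not_of_POlt (ha ▸ hb ▸ hpq) hab
  constructor
  · rintro rfl
    exact Violates.eq_of_adj_of_adj_of_label_eq hT hviol (hw.trans hw'.symm) huw hu'w'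
      (hsat hu hw huw) (hsat hu hw' hu'w')
  · rintro rfl
    exact Violates.eq_of_adj_of_adj_of_label_eq' hT hviol (hu.trans hu'.symm) huw hu'w'
      (hsat hu hw huw) (hsat hu' hw hu'w')
end

section
/- Let K be a tournament on 11 vertices partitioned into four parts N^{++}, N^{+-}, N^{-+}, N^{--} such that every transitive triangle of K contains an edge that violates the partial order N^{--} < N^{-+} < N^{++}, N^{--} < N^{+-} < N^{++} (with N^{-+}, N^{+-} incomparable). Then every part has at most 3 vertices (so exactly one part has 2 vertices and the other three have 3 vertices), and every part of size 3 induces a cyclic (directed) triangle. -/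
/-!
Edges inside one part never violate the order, so no part spans a transitive triangle. In a
tournament, a vertex of a transitive-triangle-free set has at most one out-neighbour and at most
one in-neighbour inside the set; hence such a set has at most 3 vertices, and when it has exactly
3 they form a directed cycle. Four parts of size at most 3 covering 11 vertices have sizes
3, 3, 3, 2.
-/

open Finset

namespace OrientedGraph

variable {V : Type*}

def TransTriangleFreeOn (G : OrientedGraph V) (S : Finset V) : Prop :=
  ∀ a ∈ S, ∀ b ∈ S, ∀ c ∈ S, G.adj a b → G.adj a c → G.adj b c → False

namespace TransTriangleFreeOn

variable {G : OrientedGraph V} {S : Finset V} (hS : G.TransTriangleFreeOn S) (hG : G.IsTournament)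
include hS hG

theorem outNeighbor_unique {a x y : V} (ha : a ∈ S) (hx : x ∈ S) (hy : y ∈ S)
    (hax : G.adj a x) (hay : G.adj a y) : x = y := by
  by_contra hxy
  rcases hG x y hxy with hxy | hyx
  · exact hS a ha x hx y hy hax hay hxy
  · exact hS a ha y hy x hx hay hax hyx

theorem inNeighbor_unique {a x y : V} (ha : a ∈ S) (hx : x ∈ S) (hy : y ∈ S)
    (hxa : G.adj x a) (hya : G.adj y a) : x = y := by
  by_contra hxy
  rcases hG x y hxy with hxy | hyx
  · exact hS x hx y hy a ha hxy hxa hya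
  · exact hS y hy x hx a ha hyx hya hxa

theorem card_le_three : S.card ≤ 3 := by
  classical
  obtain rfl | ⟨a, ha⟩ := S.eq_empty_or_nonempty
  · simp
  have hcover : S ⊆ insert a ({x ∈ S | G.adj a x} ∪ {x ∈ S | G.adj x a}) := by
    intro x hx
    by_cases hxa : x = a
    · simp [hxa]
    · rcases hG a x (Ne.symm hxa) with h | h <;> simp [hx, h]
  have hout : {x ∈ S | G.adj a x}.card ≤ 1 := card_le_one.mpr fun x hx y hy => by
    simp only [mem_filter] at hx hy
    exact hS.outNeighbor_unique hG ha hx.1 hy.1 hx.2 hy.2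
  have hin : {x ∈ S | G.adj x a}.card ≤ 1 := card_le_one.mpr fun x hx y hy => by
    simp only [mem_filter] at hx hy
    exact hS.inNeighbor_unique hG ha hx.1 hy.1 hx.2 hy.2
  calc S.card ≤ (insert a ({x ∈ S | G.adj a x} ∪ {x ∈ S | G.adj x a})).card :=
        card_le_card hcover
    _ ≤ ({x ∈ S | G.adj a x} ∪ {x ∈ S | G.adj x a}).card + 1 := card_insert_le _ _
    _ ≤ {x ∈ S | G.adj a x}.card + {x ∈ S | G.adj x a}.card + 1 := by
        gcongr; exact card_union_le _ _
    _ ≤ 3 := by omega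

theorem adj_and_adj_of_adj {a b c : V} (ha : a ∈ S) (hb : b ∈ S) (hc : c ∈ S)
    (hca : c ≠ a) (hcb : c ≠ b) (hab : G.adj a b) : G.adj b c ∧ G.adj c a := by
  have hca' : G.adj c a := (hG a c hca.symm).resolve_left fun hac =>
    hcb (hS.outNeighbor_unique hG ha hc hb hac hab)
  exact ⟨(hG b c hcb.symm).resolve_right fun hcb' =>
    hca (hS.inNeighbor_unique hG hb hc ha hcb' hab), hca'⟩

theorem exists_cycle_of_card_eq_three [DecidableEq V] (h3 : S.card = 3) :
    ∃ a b c : V, S = {a, b, c} ∧ G.adj a b ∧ G.adj b c ∧ G.adj c a := by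
  obtain ⟨a, b, c, hab, hac, hbc, rfl⟩ := card_eq_three.mp h3
  have ha : a ∈ ({a, b, c} : Finset V) := by simp
  have hb : b ∈ ({a, b, c} : Finset V) := by simp
  have hc : c ∈ ({a, b, c} : Finset V) := by simp
  rcases hG a b hab with h | h
  · exact ⟨a, b, c, rfl, h, hS.adj_and_adj_of_adj hG ha hb hc hac.symm hbc.symm h⟩
  · exact ⟨b, a, c, insert_comm _ _ _, h,
      hS.adj_and_adj_of_adj hG hb ha hc hbc.symm hac.symm h⟩

end TransTriangleFreeOn

end OrientedGraph

theorem transTriangleFreeOn_part_of_violates {V : Type*} [Fintype V] {K : OrientedGraph V}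
    {lbl : V → Fin 4} (hviol : ∀ a b c : V, K.adj a b → K.adj a c → K.adj b c →
      Violates K lbl a b ∨ Violates K lbl a c ∨ Violates K lbl b c) (p : Fin 4) :
    K.TransTriangleFreeOn (univ.filter (fun v => lbl v = p)) := by
  intro a ha b hb c hc hab hac hbc
  simp only [mem_filter, mem_univ, true_and] at ha hb hc
  rcases hviol a b c hab hac hbc with ⟨hne, -⟩ | ⟨hne, -⟩ | ⟨hne, -⟩ <;> simp_all

theorem exists_unique_eq_two_of_sum_eq_eleven {f : Fin 4 → ℕ} (hle : ∀ p, f p ≤ 3)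
    (hsum : ∑ p, f p = 11) : (∃! p, f p = 2) ∧ ∀ p, f p = 2 ∨ f p = 3 := by
  rw [Fin.sum_univ_four] at hsum
  have := hle 0; have := hle 1; have := hle 2; have := hle 3
  have hsizes : ∀ p, f p = 2 ∨ f p = 3 := fun p => by fin_cases p <;> simp <;> omega
  obtain ⟨p, hp⟩ : ∃ p, f p = 2 := by
    by_contra! h
    have h3 : ∀ p, f p = 3 := fun p => (hsizes p).resolve_left (h p)
    simp [h3] at hsum
  refine ⟨⟨p, hp, fun q hq => ?_⟩, hsizes⟩
  revert hp hq
  fin_cases p <;> fin_cases q <;> simp <;> omega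

/-- If every transitive triangle of a tournament `K` on `11` vertices, partitioned into
four parts, contains an edge violating the partial order, then every part has at most `3`
vertices (so exactly one part has `2` vertices and the others `3`), and every part of
size `3` induces a cyclic triangle. -/
theorem stmt_18 {V : Type*} [Fintype V] [DecidableEq V] (K : OrientedGraph V)
    (hT : K.IsTournament) (hcard : Fintype.card V = 11) (lbl : V → Fin 4)
    (hviol : ∀ a b c : V, K.adj a b → K.adj a c → K.adj b c →
      Violates K lbl a b ∨ Violates K lbl a c ∨ Violates K lbl b c) :
    (∀ p : Fin 4, (Finset.univ.filter (fun v => lbl v = p)).card ≤ 3) ∧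
    (∃! p : Fin 4, (Finset.univ.filter (fun v => lbl v = p)).card = 2) ∧
    (∀ p : Fin 4, (Finset.univ.filter (fun v => lbl v = p)).card = 2 ∨
      (Finset.univ.filter (fun v => lbl v = p)).card = 3) ∧
    (∀ p : Fin 4, (Finset.univ.filter (fun v => lbl v = p)).card = 3 →
      ∃ a b c : V, Finset.univ.filter (fun v => lbl v = p) = {a, b, c} ∧
        K.adj a b ∧ K.adj b c ∧ K.adj c a) := by
  have hfree := transTriangleFreeOn_part_of_violates hviol
  have hle : ∀ p, (univ.filter (fun v => lbl v = p)).card ≤ 3 := fun p =>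
    (hfree p).card_le_three hT
  have hsum : ∑ p, (univ.filter (fun v => lbl v = p)).card = 11 := by
    rw [← hcard, ← card_univ, card_eq_sum_card_fiberwise fun v _ => mem_univ (lbl v)]
  obtain ⟨huniq, hsizes⟩ := exists_unique_eq_two_of_sum_eq_eleven hle hsum
  exact ⟨hle, huniq, hsizes, fun p hp => (hfree p).exists_cycle_of_card_eq_three hT hp⟩
end
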